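/- Let $(I_L, I_R)$ partition node $I$, with gradient values $g_i$ and constant hessian $h_i = 1$. If each sample is assigned to $I_L$ independently of its gradient (formally: the indicator of membership in $I_L$ is independent of $g$ for each sample, samples i.i.d.), and letting $G_L, G_R$ be gradient sums and $n_L, n_R$ counts, then conditionally on $(n_L, n_R)$ with $n_L, n_R \geq 1$, $\mathbb{E}[\frac{G_L^2}{n_L} + \frac{G_R^2}{n_R} - \frac{(G_L+G_R)^2}{n_L+n_R}] = \sigma_g^2$, where $\sigma_g^2$ is the variance of $g$. -/

import Mathlib

/-!
A sum of `n` independent gradients has second moment `n σ² + (n μ)²`, so each term `G² / n` of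
the gain has expectation `σ² + n μ²`. This is affine in `n` with intercept `σ²`; since
`n_L + n_R = n_I`, the slopes cancel in `L + R - I` and exactly one `σ²` survives.
-/

open MeasureTheory ProbabilityTheory

theorem IndepFun.integral_sq_finsetSum {Ω ι : Type*} [MeasurableSpace Ω] {μ : Measure Ω}
    [IsProbabilityMeasure μ] {X : ι → Ω → ℝ} {s : Finset ι} (hX : ∀ i ∈ s, MemLp (X i) 2 μ)
    (hindep : Set.Pairwise ↑s fun i j => X i ⟂ᵢ[μ] X j) :
    μ[fun ω => (∑ i ∈ s, X i ω) ^ 2] = ∑ i ∈ s, variance (X i) μ + (∑ i ∈ s, μ[X i]) ^ 2 := by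
  have hvar := IndepFun.variance_sum hX hindep
  rw [variance_eq_sub (memLp_finsetSum' s hX)] at hvar
  simp only [Pi.pow_apply, Finset.sum_apply,
    integral_finsetSum s fun i hi => (hX i hi).integrable one_le_two] at hvar
  rw [← hvar, sub_add_cancel]

theorem split_gain_identity {a b : ℝ} (ha : a ≠ 0) (hb : b ≠ 0) (hab : a + b ≠ 0) (v m : ℝ) :
    (a * v + (a * m) ^ 2) / a + (b * v + (b * m) ^ 2) / b
      - ((a + b) * v + ((a + b) * m) ^ 2) / (a + b) = v := by
  field_simp
  ring

theorem uninformative_split_expected_gain_general {Ω : Type*} [MeasurableSpace Ω] (μ : Measure Ω)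
    [IsProbabilityMeasure μ] (nL nR : ℕ) (hnL : 1 ≤ nL) (hnR : 1 ≤ nR) (g : ℕ → Ω → ℝ)
    (hindep : iIndepFun g μ)
    (hL2 : ∀ i, MemLp (g i) 2 μ)
    (μg v : ℝ) (hmean : ∀ i, μ[g i] = μg) (hvar : ∀ i, variance (g i) μ = v) :
    μ[fun ω => (∑ i ∈ Finset.range nL, g i ω) ^ 2 / nL +
        (∑ i ∈ Finset.Ico nL (nL + nR), g i ω) ^ 2 / nR -
        ((∑ i ∈ Finset.range nL, g i ω) + ∑ i ∈ Finset.Ico nL (nL + nR), g i ω) ^ 2 /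
          ((nL : ℝ) + nR)] = v := by
  have hsq (s : Finset ℕ) :
      μ[fun ω => (∑ i ∈ s, g i ω) ^ 2] = s.card * v + (s.card * μg) ^ 2 := by
    rw [IndepFun.integral_sq_finsetSum (fun i _ => hL2 i) fun i _ j _ hij => hindep.indepFun hij]
    simp [hvar, hmean]
  have hint (s : Finset ℕ) : Integrable (fun ω => (∑ i ∈ s, g i ω) ^ 2) μ := by
    simpa using (memLp_finsetSum' s fun i _ => hL2 i).integrable_sq
  simp_rw [Finset.sum_range_add_sum_Ico _ (Nat.le_add_right nL nR)]
  rw [integral_sub ?_ ((hint _).div_const _),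
    integral_add ((hint _).div_const _) ((hint _).div_const _),
    integral_div, integral_div, integral_div, hsq, hsq, hsq]
  · simp only [Finset.card_range, Nat.card_Ico, Nat.add_sub_cancel_left, Nat.cast_add]
    exact split_gain_identity (by positivity) (by positivity) (by positivity) v μg
  · exact ((hint _).div_const _).add ((hint _).div_const _)

/-- Conditionally on child sizes `nL, nR ≥ 1`, an uninformative split (sample membership
independent of the gradients, here the first `nL` of `nL + nR` i.i.d. gradient samples go
left) has expected unnormalized gain equal to the gradient variance `v`
(unit hessians, MSE loss). -/
theorem uninformative_split_expected_gain {Ω : Type*} [MeasurableSpace Ω] (μ : Measure Ω)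
    [IsProbabilityMeasure μ] (nL nR : ℕ) (hnL : 1 ≤ nL) (hnR : 1 ≤ nR) (g : ℕ → Ω → ℝ)
    (hindep : iIndepFun g μ)
    (hident : ∀ i j, IdentDistrib (g i) (g j) μ μ)
    (hL2 : ∀ i, MemLp (g i) 2 μ)
    (μg v : ℝ) (hmean : ∀ i, μ[g i] = μg) (hvar : ∀ i, variance (g i) μ = v) :
    μ[fun ω => (∑ i ∈ Finset.range nL, g i ω) ^ 2 / nL +
        (∑ i ∈ Finset.Ico nL (nL + nR), g i ω) ^ 2 / nR -
        ((∑ i ∈ Finset.range nL, g i ω) + ∑ i ∈ Finset.Ico nL (nL + nR), g i ω) ^ 2 /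
          ((nL : ℝ) + nR)] = v :=
  uninformative_split_expected_gain_general μ nL nR hnL hnR g hindep hL2 μg v hmean hvar
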